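/- Let μ be a doubling measure on ℂ and ρ(z) defined by μ(D(z,ρ(z))) = 1. Then there exist constants C, β, γ > 0 such that C⁻¹|z|^{−γ} ≤ ρ(z) ≤ C|z|^{β} for all |z| > 1. -/

import Mathlib

/-!
In `ℂ` (indeed in any nontrivial normed space) a doubling measure is also reverse doubling:
`B(z, 4s)` contains, besides `B(z, s)`, a disjoint ball `B(y, s)` whose measure is comparable
to that of `B(z, s)`, so `μ(B(z, 4s)) ≥ (1 + C⁻²) μ(B(z, s))`. Comparing `B(z, ρ z)` with
`B(0, ρ 0)` inside a common ball of radius about `|z|`, doubling bounds the measure ratio by a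
power of `|z|` from above and reverse doubling turns that into a power bound on the ratio of the
radii, in both directions.
-/
open MeasureTheory Metric
open scoped ENNReal NNReal

section MetricSpace

variable {X : Type*} [PseudoMetricSpace X] [MeasurableSpace X] {μ : Measure X} {C : ℝ≥0}

theorem measure_ball_two_pow_mul_le
    (hC : ∀ z : X, ∀ r : ℝ, 0 < r → μ (ball z (2 * r)) ≤ C * μ (ball z r))
    (n : ℕ) (z : X) {r : ℝ} (hr : 0 < r) :
    μ (ball z (2 ^ n * r)) ≤ C ^ n * μ (ball z r) := by
  induction n with
  | zero => simp
  | succ n ih =>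
    calc μ (ball z (2 ^ (n + 1) * r)) = μ (ball z (2 * (2 ^ n * r))) := by ring_nf
      _ ≤ C * μ (ball z (2 ^ n * r)) := hC z _ (by positivity)
      _ ≤ C * (C ^ n * μ (ball z r)) := by gcongr
      _ = C ^ (n + 1) * μ (ball z r) := by ring

end MetricSpace

section NormedSpace

variable {E : Type*} [NormedAddCommGroup E] [NormedSpace ℝ E] [Nontrivial E]
  [MeasurableSpace E] [OpensMeasurableSpace E] {μ : Measure E} {C : ℝ≥0} {ρ : E → ℝ}

theorem one_add_inv_sq_mul_measure_ball_le
    (hC : ∀ z : E, ∀ r : ℝ, 0 < r → μ (ball z (2 * r)) ≤ C * μ (ball z r))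
    (z : E) {s : ℝ} (hs : 0 < s) :
    ((1 + C⁻¹ ^ 2 : ℝ≥0) : ℝ≥0∞) * μ (ball z s) ≤ μ (ball z (4 * s)) := by
  obtain ⟨v, hv⟩ := exists_norm_eq E (by positivity : 0 ≤ 3 * s)
  have hzy : dist z (z + v) = 3 * s := by rw [dist_self_add_right, hv]
  have hyz : dist (z + v) z = 3 * s := by rw [dist_comm, hzy]
  have hz_le_y : μ (ball z s) ≤ C ^ 2 * μ (ball (z + v) s) :=
    calc μ (ball z s) ≤ μ (ball (z + v) (2 ^ 2 * s)) :=
          measure_mono (ball_subset_ball' (by linarith))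
      _ ≤ C ^ 2 * μ (ball (z + v) s) := measure_ball_two_pow_mul_le hC 2 _ hs
  have hinv : ((C⁻¹ ^ 2 : ℝ≥0) : ℝ≥0∞) * μ (ball z s) ≤ μ (ball (z + v) s) :=
    calc ((C⁻¹ ^ 2 : ℝ≥0) : ℝ≥0∞) * μ (ball z s)
        ≤ ((C⁻¹ ^ 2 : ℝ≥0) : ℝ≥0∞) * (C ^ 2 * μ (ball (z + v) s)) := by gcongr
      _ = ((C⁻¹ * C) ^ 2 : ℝ≥0) * μ (ball (z + v) s) := by push_cast; ring
      _ ≤ μ (ball (z + v) s) := by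
          refine mul_le_of_le_one_left zero_le ?_
          exact ENNReal.coe_le_one_iff.mpr (pow_le_one₀ zero_le inv_mul_le_one)
  have hdisj : Disjoint (ball z s) (ball (z + v) s) := ball_disjoint_ball (by linarith)
  calc ((1 + C⁻¹ ^ 2 : ℝ≥0) : ℝ≥0∞) * μ (ball z s)
      = μ (ball z s) + ((C⁻¹ ^ 2 : ℝ≥0) : ℝ≥0∞) * μ (ball z s) := by push_cast; ring
    _ ≤ μ (ball z s) + μ (ball (z + v) s) := by gcongr
    _ = μ (ball z s ∪ ball (z + v) s) := (measure_union hdisj measurableSet_ball).symm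
    _ ≤ μ (ball z (4 * s)) := measure_mono <| Set.union_subset
          (ball_subset_ball (by linarith)) (ball_subset_ball' (by linarith))

theorem one_add_inv_sq_pow_mul_measure_ball_le
    (hC : ∀ z : E, ∀ r : ℝ, 0 < r → μ (ball z (2 * r)) ≤ C * μ (ball z r))
    (m : ℕ) (z : E) {s : ℝ} (hs : 0 < s) :
    ((1 + C⁻¹ ^ 2 : ℝ≥0) : ℝ≥0∞) ^ m * μ (ball z s) ≤ μ (ball z (4 ^ m * s)) := by
  induction m with
  | zero => simp
  | succ m ih =>
    calc ((1 + C⁻¹ ^ 2 : ℝ≥0) : ℝ≥0∞) ^ (m + 1) * μ (ball z s)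
        = ((1 + C⁻¹ ^ 2 : ℝ≥0) : ℝ≥0∞) *
            (((1 + C⁻¹ ^ 2 : ℝ≥0) : ℝ≥0∞) ^ m * μ (ball z s)) := by ring
      _ ≤ ((1 + C⁻¹ ^ 2 : ℝ≥0) : ℝ≥0∞) * μ (ball z (4 ^ m * s)) := by gcongr
      _ ≤ μ (ball z (4 * (4 ^ m * s))) :=
          one_add_inv_sq_mul_measure_ball_le hC z (by positivity)
      _ = μ (ball z (4 ^ (m + 1) * s)) := by ring_nf


theorem radius_le_four_mul_dist_add (hC0 : C ≠ 0)
    (hC : ∀ z : E, ∀ r : ℝ, 0 < r → μ (ball z (2 * r)) ≤ C * μ (ball z r))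
    (hρ : ∀ x, μ (ball x (ρ x)) = 1) (x : E) {y : E} (hy : 0 < ρ y) :
    ρ x ≤ 4 * (dist x y + ρ y) := by
  set s := dist x y + ρ y
  by_contra! hlt
  have hs_ge : 1 ≤ μ (ball x s) :=
    hρ y ▸ measure_mono (ball_subset_ball' (by rw [dist_comm]; linarith))
  have h4s_le : μ (ball x (4 * s)) ≤ 1 := hρ x ▸ measure_mono (ball_subset_ball hlt.le)
  have hle : ((1 + C⁻¹ ^ 2 : ℝ≥0) : ℝ≥0∞) ≤ 1 :=
    calc ((1 + C⁻¹ ^ 2 : ℝ≥0) : ℝ≥0∞)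
        ≤ ((1 + C⁻¹ ^ 2 : ℝ≥0) : ℝ≥0∞) * μ (ball x s) :=
          le_mul_of_one_le_right zero_le hs_ge
      _ ≤ μ (ball x (4 * s)) :=
          one_add_inv_sq_mul_measure_ball_le hC x (by positivity)
      _ ≤ 1 := h4s_le
  have hpos : 0 < C⁻¹ ^ 2 := pow_pos (inv_pos.mpr (pos_iff_ne_zero.mpr hC0)) 2
  exact (lt_add_of_pos_right 1 hpos).not_ge (by exact_mod_cast hle)

theorem le_four_pow_mul_radius
    (hC : ∀ z : E, ∀ r : ℝ, 0 < r → μ (ball z (2 * r)) ≤ C * μ (ball z r))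
    (hρ : ∀ x, μ (ball x (ρ x)) = 1) {x y : E} (hx : 0 < ρ x) (hy : 0 < ρ y) {m n : ℕ}
    (hmn : C ^ n < (1 + C⁻¹ ^ 2) ^ m) (hxy : dist x y + ρ y ≤ 2 ^ n * ρ y) :
    ρ y ≤ 4 ^ m * ρ x := by
  by_contra! hlt
  have : ((1 + C⁻¹ ^ 2 : ℝ≥0) : ℝ≥0∞) ^ m ≤ C ^ n :=
    calc ((1 + C⁻¹ ^ 2 : ℝ≥0) : ℝ≥0∞) ^ m
        = ((1 + C⁻¹ ^ 2 : ℝ≥0) : ℝ≥0∞) ^ m * μ (ball x (ρ x)) := by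
          rw [hρ x, mul_one]
      _ ≤ μ (ball x (4 ^ m * ρ x)) := one_add_inv_sq_pow_mul_measure_ball_le hC m x hx
      _ ≤ μ (ball y (2 ^ n * ρ y)) := measure_mono (ball_subset_ball' (by linarith))
      _ ≤ C ^ n * μ (ball y (ρ y)) := measure_ball_two_pow_mul_le hC n y hy
      _ = C ^ n := by rw [hρ y, mul_one]
  exact hmn.not_ge (by exact_mod_cast this)

theorem div_pow_le_radius
    (hC : ∀ z : E, ∀ r : ℝ, 0 < r → μ (ball z (2 * r)) ≤ C * μ (ball z r))
    (hρ : ∀ x, μ (ball x (ρ x)) = 1) {x y : E} (hx : 0 < ρ x) (hy : 0 < ρ y) {p : ℕ}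
    (hp : C < (1 + C⁻¹ ^ 2) ^ p) (hxy : 1 ≤ dist x y) :
    ρ y / (2 * (1 + ρ y) / ρ y * dist x y) ^ (2 * p) ≤ ρ x := by
  -- `2 ^ (k + 1)` is comparable to `dist x y`, so `4 ^ (p * (k + 1))` is polynomial in it.
  obtain ⟨k, hk_le, hk_lt⟩ := exists_nat_pow_near (x := (dist x y + ρ y) / ρ y)
    ((one_le_div hy).mpr (by linarith)) one_lt_two
  have hdist : dist x y + ρ y ≤ 2 ^ (k + 1) * ρ y := ((div_lt_iff₀ hy).mp hk_lt).le
  have hmn : C ^ (k + 1) < (1 + C⁻¹ ^ 2) ^ (p * (k + 1)) := by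
    rw [pow_mul]; exact pow_lt_pow_left₀ hp zero_le k.succ_ne_zero
  have hscale : (2 : ℝ) ^ (k + 1) ≤ 2 * (1 + ρ y) / ρ y * dist x y :=
    calc (2 : ℝ) ^ (k + 1) = 2 * 2 ^ k := pow_succ' 2 k
      _ ≤ 2 * ((dist x y + ρ y) / ρ y) := by gcongr
      _ ≤ 2 * (1 + ρ y) / ρ y * dist x y := by
          rw [mul_div_assoc, mul_assoc, div_mul_eq_mul_div]
          gcongr
          nlinarith
  calc ρ y / (2 * (1 + ρ y) / ρ y * dist x y) ^ (2 * p)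
        ≤ ρ y / ((2 : ℝ) ^ (k + 1)) ^ (2 * p) := by gcongr
    _ = ρ y / 4 ^ (p * (k + 1)) := by
        rw [← pow_mul, show (4 : ℝ) = 2 ^ 2 by norm_num, ← pow_mul]; ring_nf
    _ ≤ ρ x :=
        (div_le_iff₀' (by positivity)).mpr (le_four_pow_mul_radius hC hρ hx hy hmn hdist)

end NormedSpace

/-- `μ` is doubling: there is `C` with `μ(D(z,2r)) ≤ C·μ(D(z,r))`. -/
def Doubling (μ : MeasureTheory.Measure ℂ) : Prop :=
  ∃ C : ℝ≥0, ∀ z : ℂ, ∀ r : ℝ, 0 < r → μ (ball z (2 * r)) ≤ (C : ℝ≥0∞) * μ (ball z r)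

/-- Polynomial growth/decay of `ρ`: if `μ` is doubling on `ℂ` and `ρ(z)` satisfies
`μ(D(z,ρ(z))) = 1`, then there are `C, β, γ > 0` with
`C⁻¹|z|^{−γ} ≤ ρ(z) ≤ C|z|^{β}` for `|z| > 1`. -/
theorem stmt18 (μ : MeasureTheory.Measure ℂ) (hμ : Doubling μ)
    (ρ : ℂ → ℝ) (hρpos : ∀ z, 0 < ρ z) (hρ : ∀ z, μ (ball z (ρ z)) = 1) :
    ∃ C β γ : ℝ, 0 < C ∧ 0 < β ∧ 0 < γ ∧
      ∀ z : ℂ, 1 < ‖z‖ →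
        C⁻¹ * ‖z‖ ^ (-γ) ≤ ρ z ∧ ρ z ≤ C * ‖z‖ ^ β := by
  obtain ⟨C₀, hC₀⟩ := hμ
  set C := max C₀ 1
  have hC : ∀ z : ℂ, ∀ r : ℝ, 0 < r → μ (ball z (2 * r)) ≤ C * μ (ball z r) :=
    fun z r hr ↦ (hC₀ z r hr).trans (by gcongr; exact le_max_left _ _)
  have hC1 : 1 ≤ C := le_max_right _ _
  obtain ⟨p, hp⟩ : ∃ p : ℕ, C < (1 + C⁻¹ ^ 2) ^ p :=
    pow_unbounded_of_one_lt C (lt_add_of_pos_right 1 (by positivity))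
  have hp0 : p ≠ 0 := by rintro rfl; exact hp.not_ge (by simpa using hC1)
  set r₀ := ρ 0
  set K := 2 * (1 + r₀) / r₀
  have hr₀ : 0 < r₀ := hρpos 0
  refine ⟨max (4 * (1 + r₀)) (K ^ (2 * p) / r₀), 1, (2 * p : ℕ), by positivity, one_pos,
    by positivity, fun z hz ↦ ⟨?_, ?_⟩⟩
  · have hnorm : ‖z‖ ^ (-((2 * p : ℕ) : ℝ)) = (‖z‖ ^ (2 * p))⁻¹ := by
      rw [Real.rpow_neg (norm_nonneg z), Real.rpow_natCast]
    calc _ ≤ (K ^ (2 * p) / r₀)⁻¹ * (‖z‖ ^ (2 * p))⁻¹ := by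
          rw [hnorm]; gcongr; exact le_max_right _ _
      _ = r₀ / (K * dist z 0) ^ (2 * p) := by
          rw [dist_zero_right, mul_pow, inv_div]; ring
      _ ≤ ρ z :=
          div_pow_le_radius hC hρ (hρpos z) hr₀ hp (by rw [dist_zero_right]; exact hz.le)
  · calc ρ z ≤ 4 * (dist z 0 + r₀) :=
          radius_le_four_mul_dist_add (by positivity) hC hρ z hr₀
      _ ≤ 4 * (1 + r₀) * ‖z‖ := by rw [dist_zero_right]; nlinarith
      _ ≤ _ := by rw [Real.rpow_one]; gcongr; exact le_max_left _ _
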